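/- arXiv:1803.05826 — 6 statements merged into one kernel-verified Lean document; each statement's English description precedes it below -/
import Mathlib

section
/- If (A, ∘, ·) is a skew brace, then (A, ∘, ·ᵒᵖ), where a ·ᵒᵖ b = b · a, is also a skew brace. -/
structure SkewBrace (A : Type*) where
  circ : A → A → A
  cinv : A → A
  ce : A
  mul : A → A → A
  inv : A → A
  e : A
  circ_assoc : ∀ a b c, circ (circ a b) c = circ a (circ b c)
  ce_circ : ∀ a, circ ce a = a
  circ_ce : ∀ a, circ a ce = a
  cinv_circ : ∀ a, circ (cinv a) a = ce
  circ_cinv : ∀ a, circ a (cinv a) = ce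
  mul_assoc : ∀ a b c, mul (mul a b) c = mul a (mul b c)
  e_mul : ∀ a, mul e a = a
  mul_e : ∀ a, mul a e = a
  inv_mul : ∀ a, mul (inv a) a = e
  mul_inv : ∀ a, mul a (inv a) = e
  distrib : ∀ a b c, circ a (mul b c) = mul (mul (circ a b) (inv a)) (circ a c)

def SkewBrace.lam {A : Type*} (B : SkewBrace A) (a b : A) : A :=
  B.mul (B.inv a) (B.circ a b)

def SkewBrace.rho {A : Type*} (B : SkewBrace A) (a b : A) : A :=
  B.mul (B.circ a b) (B.inv a)

def SkewBrace.op {A : Type*} (B : SkewBrace A) : SkewBrace A :=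
  { B with
    mul := fun a b => B.mul b a
    mul_assoc := fun a b c => (B.mul_assoc c b a).symm
    e_mul := B.mul_e
    mul_e := B.e_mul
    inv_mul := B.mul_inv
    mul_inv := B.inv_mul
    distrib := fun a b c => (B.distrib a c b).trans (B.mul_assoc _ _ _) }

/-- If `(A, ∘, ·)` is a skew brace, so is `(A, ∘, ·ᵒᵖ)`. -/
theorem skewBrace_op {A : Type*} (B : SkewBrace A) :
    ∃ B' : SkewBrace A, B'.circ = B.circ ∧ B'.mul = fun a b => B.mul b a :=
  ⟨B.op, rfl, rfl⟩
end

section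
/- Let (A, ∘, ·) be a skew brace and X_A = End(A, ·) the monoid of group endomorphisms of (A, ·). Then a ⋄ χ := λ_a ∘ χ ∘ ρ_a⁻¹ defines a left action of (A, ∘) on the set X_A, where λ_a(b) = a⁻¹ · (a ∘ b) and ρ_a(b) = (a ∘ b) · a⁻¹. -/
/-- The diamond action `a ⋄ χ = λ_a ∘ χ ∘ ρ_a⁻¹` on `End(A, ·)`. -/
def SkewBrace.dia {A : Type*} (B : SkewBrace A) (a : A) (χ : A → A) : A → A :=
  fun b => B.lam a (χ (B.rho (B.cinv a) b))

/-! `λ` and `ρ` both turn `∘` into composition and are endomorphisms of `(A, ·)`, and the two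
groups share their identity. Writing `a'` for the `∘`-inverse, `ρ_a⁻¹ = ρ_{a'}`, so
`a ⋄ χ = λ_a ∘ χ ∘ ρ_{a'}` is a composite of endomorphisms, `ce ⋄ χ = χ`, and, since
`(a ∘ b)' = b' ∘ a'`, `(a ∘ b) ⋄ χ = λ_a λ_b ∘ χ ∘ ρ_{b'} ρ_{a'} = a ⋄ (b ⋄ χ)`. -/

namespace SkewBrace

variable {A : Type*} (B : SkewBrace A)

lemma inv_mul_cancel_left (a b : A) : B.mul (B.inv a) (B.mul a b) = b := by
  rw [← B.mul_assoc, B.inv_mul, B.e_mul]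

lemma mul_inv_cancel_left (a b : A) : B.mul a (B.mul (B.inv a) b) = b := by
  rw [← B.mul_assoc, B.mul_inv, B.e_mul]

lemma mul_left_cancel {a b c : A} (h : B.mul a b = B.mul a c) : b = c := by
  rw [← B.inv_mul_cancel_left a b, h, B.inv_mul_cancel_left]

lemma eq_inv_of_mul_eq_e {a b : A} (h : B.mul a b = B.e) : b = B.inv a := by
  rw [← B.inv_mul_cancel_left a b, h, B.mul_e]

lemma eq_cinv_of_circ_eq_ce {a b : A} (h : B.circ a b = B.ce) : b = B.cinv a := by
  rw [← B.ce_circ b, ← B.cinv_circ a, B.circ_assoc, h, B.circ_ce]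

lemma inv_e : B.inv B.e = B.e :=
  (B.eq_inv_of_mul_eq_e (B.e_mul B.e)).symm

lemma cinv_ce : B.cinv B.ce = B.ce :=
  (B.eq_cinv_of_circ_eq_ce (B.ce_circ B.ce)).symm

lemma circ_cinv_rev (a b : A) : B.cinv (B.circ a b) = B.circ (B.cinv b) (B.cinv a) := by
  refine (B.eq_cinv_of_circ_eq_ce ?_).symm
  rw [B.circ_assoc, ← B.circ_assoc b, B.circ_cinv, B.ce_circ, B.circ_cinv]

lemma lam_mul (a x y : A) : B.lam a (B.mul x y) = B.mul (B.lam a x) (B.lam a y) := by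
  simp only [lam, B.distrib, B.mul_assoc]

lemma rho_mul (a x y : A) : B.rho a (B.mul x y) = B.mul (B.rho a x) (B.rho a y) := by
  simp only [rho, B.distrib, B.mul_assoc]

lemma lam_e (a : A) : B.lam a B.e = B.e := by
  refine B.mul_left_cancel (a := B.lam a B.e) ?_
  rw [← B.lam_mul, B.e_mul, B.mul_e]

lemma mul_lam (a b : A) : B.mul a (B.lam a b) = B.circ a b :=
  B.mul_inv_cancel_left a _

lemma circ_e (a : A) : B.circ a B.e = a := by
  rw [← B.mul_lam, B.lam_e, B.mul_e]

lemma ce_eq_e : B.ce = B.e := by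
  rw [← B.circ_e B.ce, B.ce_circ]

lemma lam_ce (x : A) : B.lam B.ce x = x := by
  rw [lam, B.ce_circ, B.ce_eq_e, B.inv_e, B.e_mul]

lemma rho_ce (x : A) : B.rho B.ce x = x := by
  rw [rho, B.ce_circ, B.ce_eq_e, B.inv_e, B.mul_e]

lemma lam_inv (a b : A) : B.lam a (B.inv b) = B.inv (B.lam a b) := by
  refine B.eq_inv_of_mul_eq_e ?_
  rw [← B.lam_mul, B.mul_inv, B.lam_e]

lemma inv_circ (a b : A) :
    B.inv (B.circ a b) = B.mul (B.mul (B.inv a) (B.circ a (B.inv b))) (B.inv a) := by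
  refine (B.eq_inv_of_mul_eq_e ?_).symm
  rw [← B.mul_lam a b, ← lam, B.lam_inv, B.mul_assoc a, ← B.mul_assoc (B.lam a b),
    B.mul_inv, B.e_mul, B.mul_inv]

lemma lam_circ (a b x : A) : B.lam (B.circ a b) x = B.lam a (B.lam b x) := by
  simp only [lam, B.circ_assoc, B.inv_circ a b, B.distrib a (B.inv b), B.mul_assoc]

lemma rho_circ (a b x : A) : B.rho (B.circ a b) x = B.rho a (B.rho b x) := by
  simp only [rho, B.circ_assoc, B.inv_circ a b, B.distrib a _ (B.inv b), B.mul_assoc]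

lemma dia_map_mul (a : A) {χ : A → A} (hχ : ∀ x y, χ (B.mul x y) = B.mul (χ x) (χ y))
    (x y : A) : B.dia a χ (B.mul x y) = B.mul (B.dia a χ x) (B.dia a χ y) := by
  unfold dia
  rw [B.rho_mul, hχ, B.lam_mul]

lemma dia_ce (χ : A → A) : B.dia B.ce χ = χ := by
  funext x
  rw [dia, B.cinv_ce, B.rho_ce, B.lam_ce]

lemma dia_circ (a b : A) (χ : A → A) : B.dia (B.circ a b) χ = B.dia a (B.dia b χ) := by
  funext x
  unfold dia
  rw [B.circ_cinv_rev, B.rho_circ, B.lam_circ]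

end SkewBrace

/-- `⋄` defines a left action of `(A, ∘)` on the monoid `End(A, ·)`. -/
theorem skewBrace_dia_action {A : Type*} (B : SkewBrace A) :
    (∀ (a : A) (χ : A → A), (∀ x y, χ (B.mul x y) = B.mul (χ x) (χ y)) →
      ∀ x y, B.dia a χ (B.mul x y) = B.mul (B.dia a χ x) (B.dia a χ y)) ∧
    (∀ χ : A → A, B.dia B.ce χ = χ) ∧
    (∀ (a b : A) (χ : A → A), B.dia (B.circ a b) χ = B.dia a (B.dia b χ)) :=
  ⟨fun a _ hχ => B.dia_map_mul a hχ, B.dia_ce, B.dia_circ⟩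
end

section
/- Let (A, ∘) be a group with a braiding operator r: A × A → A × A, r(a,b) = (a ▷ b, a ◁ b). Then the operation a · b := a ∘ (ā ▷ b), where ā is the ∘-inverse of a, defines a group structure on A such that (A, ∘, ·) is a skew brace, and a ▷ b = λ_a(b) = a⁻¹ · (a ∘ b). -/
structure BraidedGroup (A : Type*) where
  circ : A → A → A
  cinv : A → A
  ce : A
  circ_assoc : ∀ a b c, circ (circ a b) c = circ a (circ b c)
  ce_circ : ∀ a, circ ce a = a
  circ_ce : ∀ a, circ a ce = a
  cinv_circ : ∀ a, circ (cinv a) a = ce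
  circ_cinv : ∀ a, circ a (cinv a) = ce
  r : A × A → A × A
  r_rule1 : ∀ a b c : A,
    r (circ a b, c) =
      ((r (a, (r (b, c)).1)).1, circ (r (a, (r (b, c)).1)).2 (r (b, c)).2)
  r_rule2 : ∀ a b c : A,
    r (a, circ b c) =
      (circ (r (a, b)).1 (r ((r (a, b)).2, c)).1, (r ((r (a, b)).2, c)).2)
  r_unit1 : ∀ a, r (a, ce) = (ce, a)
  r_unit2 : ∀ a, r (ce, a) = (a, ce)
  r_comp : ∀ a b, circ (r (a, b)).1 (r (a, b)).2 = circ a b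

/-! The first component `a ▷ b` of the braiding is a left action of `(A, ∘)` on `A`, and the
braid relation `a ▷ (b ∘ c) = (a ▷ b) ∘ ((a ◁ b) ▷ c)` together with `m ∘ r = m` says that each
`a ▷ -` is an automorphism of `a · b = a ∘ (ā ▷ b)`. Associativity of `·` follows from this, the
`·`-inverse of `a` is `a ▷ ā`, and `a ∘ b = a · (a ▷ b)` turns the skew brace identity into the
group law of `·`. -/

namespace BraidedGroup

variable {A : Type*} (G : BraidedGroup A)

def leftAct (a b : A) : A := (G.r (a, b)).1

def rightAct (a b : A) : A := (G.r (a, b)).2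

def braceMul (a b : A) : A := G.circ a (G.leftAct (G.cinv a) b)

def braceInv (a : A) : A := G.leftAct a (G.cinv a)

theorem eq_cinv_of_circ_eq_ce {a x : A} (h : G.circ a x = G.ce) : x = G.cinv a := by
  have h' := congrArg (G.circ (G.cinv a)) h
  rwa [← G.circ_assoc, G.cinv_circ, G.ce_circ, G.circ_ce] at h'

theorem cinv_ce : G.cinv G.ce = G.ce :=
  (G.eq_cinv_of_circ_eq_ce (G.ce_circ G.ce)).symm

theorem cinv_circ_rev (a b : A) : G.cinv (G.circ a b) = G.circ (G.cinv b) (G.cinv a) := by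
  refine (G.eq_cinv_of_circ_eq_ce ?_).symm
  rw [G.circ_assoc, ← G.circ_assoc b, G.circ_cinv, G.ce_circ, G.circ_cinv]

theorem circ_leftAct (a b c : A) : G.leftAct (G.circ a b) c = G.leftAct a (G.leftAct b c) :=
  (congrArg Prod.fst (G.r_rule1 a b c) :)

theorem leftAct_circ (a b c : A) :
    G.leftAct a (G.circ b c) = G.circ (G.leftAct a b) (G.leftAct (G.rightAct a b) c) :=
  congrArg Prod.fst (G.r_rule2 a b c)

theorem leftAct_ce (a : A) : G.leftAct a G.ce = G.ce :=
  congrArg Prod.fst (G.r_unit1 a)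

theorem ce_leftAct (a : A) : G.leftAct G.ce a = a :=
  congrArg Prod.fst (G.r_unit2 a)

theorem cinv_leftAct_leftAct (a b : A) : G.leftAct (G.cinv a) (G.leftAct a b) = b := by
  rw [← circ_leftAct, G.cinv_circ, ce_leftAct]

theorem leftAct_circ_rightAct (a b : A) :
    G.circ (G.leftAct a b) (G.rightAct a b) = G.circ a b :=
  G.r_comp a b

theorem rightAct_circ_cinv (a b : A) :
    G.circ (G.rightAct a b) (G.cinv b) = G.circ (G.cinv (G.leftAct a b)) a := by
  have h := congrArg (fun x => G.circ (G.cinv (G.leftAct a b)) (G.circ x (G.cinv b)))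
    (G.leftAct_circ_rightAct a b)
  simp only [G.circ_assoc, G.circ_cinv, G.circ_ce] at h
  rwa [← G.circ_assoc, G.cinv_circ, G.ce_circ] at h

theorem braceMul_ce (a : A) : G.braceMul a G.ce = a := by
  rw [braceMul, leftAct_ce, G.circ_ce]

theorem ce_braceMul (a : A) : G.braceMul G.ce a = a := by
  rw [braceMul, cinv_ce, ce_leftAct, G.ce_circ]

theorem circ_eq_braceMul_leftAct (a b : A) : G.circ a b = G.braceMul a (G.leftAct a b) := by
  rw [braceMul, cinv_leftAct_leftAct]

theorem leftAct_braceMul (a b c : A) :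
    G.leftAct a (G.braceMul b c) = G.braceMul (G.leftAct a b) (G.leftAct a c) := by
  rw [braceMul, braceMul, leftAct_circ, ← circ_leftAct, ← circ_leftAct, rightAct_circ_cinv]

theorem braceMul_assoc (a b c : A) :
    G.braceMul (G.braceMul a b) c = G.braceMul a (G.braceMul b c) := by
  calc G.braceMul (G.braceMul a b) c
      = G.circ a (G.braceMul (G.leftAct (G.cinv a) b) (G.leftAct (G.cinv a) c)) := by
        rw [braceMul, braceMul, cinv_circ_rev, circ_leftAct, G.circ_assoc]; rfl
    _ = G.braceMul a (G.braceMul b c) := by rw [← leftAct_braceMul]; rfl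

theorem braceMul_braceInv (a : A) : G.braceMul a (G.braceInv a) = G.ce := by
  rw [braceMul, braceInv, cinv_leftAct_leftAct, G.circ_cinv]

theorem cinv_braceInv (a : A) : G.cinv (G.braceInv a) = G.rightAct a (G.cinv a) := by
  refine (G.eq_cinv_of_circ_eq_ce ?_).symm
  rw [braceInv, leftAct_circ_rightAct, G.circ_cinv]

theorem braceInv_braceMul_eq (a x : A) :
    G.braceMul (G.braceInv a) x = G.leftAct a (G.circ (G.cinv a) x) := by
  rw [braceMul, cinv_braceInv, leftAct_circ, braceInv]

theorem braceInv_braceMul (a : A) : G.braceMul (G.braceInv a) a = G.ce := by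
  rw [braceInv_braceMul_eq, G.cinv_circ, leftAct_ce]

theorem leftAct_eq_braceInv_braceMul_circ (a b : A) :
    G.leftAct a b = G.braceMul (G.braceInv a) (G.circ a b) := by
  rw [braceInv_braceMul_eq, ← G.circ_assoc, G.cinv_circ, G.ce_circ]

theorem circ_braceMul (a b c : A) :
    G.circ a (G.braceMul b c) =
      G.braceMul (G.braceMul (G.circ a b) (G.braceInv a)) (G.circ a c) := by
  rw [circ_eq_braceMul_leftAct G a b, circ_eq_braceMul_leftAct G a c, circ_eq_braceMul_leftAct,
    leftAct_braceMul, braceMul_assoc, braceMul_assoc, ← braceMul_assoc G (G.braceInv a),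
    braceInv_braceMul, ce_braceMul]

def toSkewBrace : SkewBrace A where
  circ := G.circ
  cinv := G.cinv
  ce := G.ce
  mul := G.braceMul
  inv := G.braceInv
  e := G.ce
  circ_assoc := G.circ_assoc
  ce_circ := G.ce_circ
  circ_ce := G.circ_ce
  cinv_circ := G.cinv_circ
  circ_cinv := G.circ_cinv
  mul_assoc := G.braceMul_assoc
  e_mul := G.ce_braceMul
  mul_e := G.braceMul_ce
  inv_mul := G.braceInv_braceMul
  mul_inv := G.braceMul_braceInv
  distrib := G.circ_braceMul

end BraidedGroup

/-- A braiding operator on `(A, ∘)` yields a skew brace with `a · b = a ∘ (ā ▷ b)`,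
and then `a ▷ b = λ_a(b)`. -/
theorem braidedGroup_gives_skewBrace {A : Type*} (G : BraidedGroup A) :
    ∃ B : SkewBrace A, B.circ = G.circ ∧ B.ce = G.ce ∧ B.cinv = G.cinv ∧
      (∀ a b, B.mul a b = G.circ a ((G.r (G.cinv a, b)).1)) ∧
      (∀ a b, (G.r (a, b)).1 = B.mul (B.inv a) (B.circ a b)) :=
  ⟨G.toSkewBrace, rfl, rfl, rfl, fun _ _ => rfl, G.leftAct_eq_braceInv_braceMul_circ⟩
end

section
/- Let (A, ∘, r) be a group with braiding operator. Then the map k = r²: A × A → A × A together with the multiplication action m_A makes (A, m_A, r²) a braided action of (A, ∘, r): it satisfies k(m × id) = (m × id)(id × k)(r × id)(id × k), k(id × m) = (id × m)(r × id)(id × k)(r × id), k(e, a) = (e, a), and m ∘ k = m. -/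
/-- `r` acting on the first two tensor factors. -/
def stepR {A X : Type*} (r : A × A → A × A) (p : A × A × X) : A × A × X :=
  ((r (p.1, p.2.1)).1, (r (p.1, p.2.1)).2, p.2.2)

/-- a map `k : A × X → A × X` acting on the last two tensor factors. -/
def stepK {A X : Type*} (k : A × X → A × X) (p : A × A × X) : A × A × X :=
  (p.1, k p.2)

/-- the multiplication `m × id`. -/
def collM {A X : Type*} (m : A → A → A) (p : A × A × X) : A × X :=
  (m p.1 p.2.1, p.2.2)

/-- the action `id × m_X`. -/
def collMX {A X : Type*} (mX : A → X → X) (p : A × A × X) : A × X :=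
  (p.1, mX p.2.1 p.2.2)

/-!
Write `r₁ = r × id` and `r₂ = id × r`. The hexagon axioms say `r (m × id) = (id × m) r₁ r₂` and
`r (id × m) = (m × id) r₂ r₁`; applying them twice expresses `r² (m × id)` and `r² (id × m)` as
words in `r₁, r₂`. The second identity is then immediate, and the first follows from the braid
relation `r₁ r₂ r₁ = r₂ r₁ r₂` together with `m r = m`. Both sides of the braid relation have first
coordinate `r(ab, c)₁` and last coordinate `r(a, bc)₂` by the hexagon axioms, and both preserve the
product `abc`, so their middle coordinates agree by cancellation.
-/

theorem stepK_comp {A X : Type*} (f g : A × X → A × X) (p : A × A × X) :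
    stepK (f ∘ g) p = stepK f (stepK g p) :=
  rfl

namespace BraidedGroup

variable {A : Type*} (G : BraidedGroup A)

theorem circ_left_cancel {a b c : A} (h : G.circ a b = G.circ a c) : b = c := by
  simpa only [← G.circ_assoc, G.cinv_circ, G.ce_circ] using congrArg (G.circ (G.cinv a)) h

theorem circ_right_cancel {a b c : A} (h : G.circ b a = G.circ c a) : b = c := by
  simpa only [G.circ_assoc, G.circ_cinv, G.circ_ce] using congrArg (G.circ · (G.cinv a)) h

theorem circ_r (p : A × A) : G.circ (G.r p).1 (G.r p).2 = G.circ p.1 p.2 :=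
  G.r_comp p.1 p.2

theorem r_collM (p : A × A × A) :
    G.r (collM G.circ p) = collMX G.circ (stepR G.r (stepK G.r p)) :=
  G.r_rule1 p.1 p.2.1 p.2.2

theorem r_collMX (p : A × A × A) :
    G.r (collMX G.circ p) = collM G.circ (stepK G.r (stepR G.r p)) :=
  G.r_rule2 p.1 p.2.1 p.2.2

theorem collM_stepR (p : A × A × A) : collM G.circ (stepR G.r p) = collM G.circ p := by
  rw [collM, collM, stepR, circ_r]

theorem fst_r_circ_left (a b c : A) :
    (G.r (G.circ a b, c)).1 = (G.r (a, (G.r (b, c)).1)).1 := by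
  rw [G.r_rule1]

theorem snd_r_circ_right (a b c : A) :
    (G.r (a, G.circ b c)).2 = (G.r ((G.r (a, b)).2, c)).2 := by
  rw [G.r_rule2]

def mul3 (p : A × A × A) : A :=
  G.circ p.1 (G.circ p.2.1 p.2.2)

theorem mul3_stepR (p : A × A × A) : G.mul3 (stepR G.r p) = G.mul3 p := by
  simp only [mul3, stepR, ← G.circ_assoc, circ_r]

theorem mul3_stepK (p : A × A × A) : G.mul3 (stepK G.r p) = G.mul3 p := by
  simp only [mul3, stepK, circ_r]

theorem eq_of_mul3_eq {p q : A × A × A} (h₁ : p.1 = q.1) (h₃ : p.2.2 = q.2.2)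
    (h : G.mul3 p = G.mul3 q) : p = q := by
  obtain ⟨a, b, c⟩ := p
  obtain ⟨a', b', c'⟩ := q
  dsimp only [mul3] at h₁ h₃ h
  subst h₁ h₃
  rw [G.circ_right_cancel (G.circ_left_cancel h)]

theorem braid (p : A × A × A) :
    stepR G.r (stepK G.r (stepR G.r p)) = stepK G.r (stepR G.r (stepK G.r p)) := by
  obtain ⟨a, b, c⟩ := p
  refine G.eq_of_mul3_eq ?_ ?_ ?_
  · simp only [stepR, stepK]
    rw [← G.fst_r_circ_left (G.r (a, b)).1 (G.r (a, b)).2 c, circ_r, fst_r_circ_left]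
  · simp only [stepR, stepK]
    rw [← G.snd_r_circ_right a (G.r (b, c)).1 (G.r (b, c)).2, circ_r, snd_r_circ_right]
  · simp only [mul3_stepR, mul3_stepK]

end BraidedGroup

/-- For a group with braiding `(A, ∘, r)`, `(A, m_A, r²)` is a braided action. -/
theorem rsq_braided_action {A : Type*} (G : BraidedGroup A) :
    (∀ p : A × A × A, (G.r ∘ G.r) (collM G.circ p) =
      collM G.circ (stepK (G.r ∘ G.r) (stepR G.r (stepK (G.r ∘ G.r) p)))) ∧
    (∀ p : A × A × A, (G.r ∘ G.r) (collMX G.circ p) =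
      collMX G.circ (stepR G.r (stepK (G.r ∘ G.r) (stepR G.r p)))) ∧
    (∀ a : A, (G.r ∘ G.r) (G.ce, a) = (G.ce, a)) ∧
    (∀ p : A × A, G.circ ((G.r ∘ G.r) p).1 ((G.r ∘ G.r) p).2 = G.circ p.1 p.2) := by
  refine ⟨fun p => ?_, fun p => ?_, fun a => ?_, fun p => ?_⟩
  · rw [Function.comp_apply, G.r_collM, G.r_collMX, stepK_comp, stepK_comp, ← G.braid,
      ← G.braid, G.collM_stepR]
  · rw [Function.comp_apply, G.r_collMX, G.r_collM, stepK_comp]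
  · rw [Function.comp_apply, G.r_unit2, G.r_unit1]
  · rw [Function.comp_apply, G.circ_r, G.circ_r]
end

section
/- Let (A, ∘, r) be a group with braiding arising from a skew brace (A, ∘, ·), with j₁(a) = (a, e) and ι(a) = (a, ā) in the twisted product group A ⋈ A. Then j₁(b) ∘_⋈ ι(a) = ι(ρ_b(a)) ∘_⋈ j₁(b) for all a, b ∈ A, where ρ_b(a) = (b ∘ a) · b⁻¹. Consequently the map (A, ∘) ⋉_ρ (A, ·) → A ⋈ A, (a, b) ↦ j₁(a) ∘_⋈ ι(b), is a group isomorphism from the semidirect product to the twisted product. -/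
/-!
Write `(A, ∘)` multiplicatively and `(A, ·)` additively, so that the brace law reads
`a * (b + c) = a * b - a + a * c`. The key identity is `λ_{x⁻¹}(v) = x⁻¹ * (x + v)`: it turns every
product in `A ⋈ A` whose left factor has second coordinate `x⁻¹` into an expression in the group
`(A, ∘)` alone. In particular `j₁(a) ι(b) = (a * b, b⁻¹)`, so `(a, b) ↦ j₁(a) ι(b)` is an involution,
and both the commutation rule and multiplicativity reduce to `ρ_b(a) + b = b * a` and
`c * (ρ_{c⁻¹}(b) + d) = b + c * d`.
-/

class IsSkewBrace (A : Type*) [Group A] [AddGroup A] : Prop where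
  mul_add_eq : ∀ a b c : A, a * (b + c) = a * b - a + a * c

namespace IsSkewBrace

variable {A : Type*} [Group A] [AddGroup A]

def lam (a b : A) : A := -a + a * b

def braiding (p : A × A) : A × A := (lam p.1 p.2, (lam p.1 p.2)⁻¹ * (p.1 * p.2))

def twistedMul (p q : A × A) : A × A :=
  (p.1 * (braiding (p.2, q.1)).1, (braiding (p.2, q.1)).2 * q.2)

def semidirectMul (p q : A × A) : A × A := (p.1 * q.1, q.1⁻¹ * p.2 - q.1⁻¹ + q.2)

def toTwisted (p : A × A) : A × A := twistedMul (p.1, 1) (p.2, p.2⁻¹)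

variable [IsSkewBrace A]

theorem mul_zero_eq_self (a : A) : a * 0 = a := by
  have h := mul_add_eq a 0 0
  rw [add_zero, eq_comm, add_eq_right, sub_eq_zero] at h
  exact h

theorem one_eq_zero : (1 : A) = 0 := (mul_zero_eq_self 1).symm.trans (one_mul 0)

theorem mul_neg_inv (a : A) : a * -a⁻¹ = a + a := by
  have h := mul_add_eq a (-a⁻¹) a⁻¹
  rw [neg_add_cancel, mul_zero_eq_self, mul_inv_cancel, one_eq_zero, add_zero] at h
  exact sub_eq_iff_eq_add.mp h.symm

theorem lam_inv (a b : A) : lam a⁻¹ b = a⁻¹ * (a + b) := by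
  refine eq_inv_mul_of_mul_eq ?_
  rw [lam, mul_add_eq, mul_neg_inv, mul_inv_cancel_left, add_sub_cancel_right]

theorem mul_sub_add (c b d : A) : c * (c⁻¹ * b - c⁻¹ + d) = b + c * d := by
  rw [mul_add_eq, sub_eq_add_neg (c⁻¹ * b), mul_add_eq, mul_inv_cancel_left, mul_neg_inv]
  simp only [sub_eq_add_neg, add_assoc, neg_add_cancel_left, add_neg_cancel_left]

theorem twistedMul_inv_left (u x v w : A) :
    twistedMul (u, x⁻¹) (v, w) = (u * x⁻¹ * (x + v), (x + v)⁻¹ * v * w) := by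
  simp only [twistedMul, braiding, lam_inv]
  group

theorem toTwisted_apply (p : A × A) : toTwisted p = (p.1 * p.2, p.2⁻¹) := by
  simp only [toTwisted, twistedMul, braiding, lam, one_mul]
  rw [one_eq_zero, neg_zero, zero_add]
  group

theorem toTwisted_involutive : Function.Involutive (toTwisted : A × A → A × A) := fun p => by
  simp only [toTwisted_apply, mul_inv_cancel_right, inv_inv]

theorem twistedMul_j_iota (a b : A) :
    twistedMul (b, 1) (a, a⁻¹) = twistedMul (b * a - b, (b * a - b)⁻¹) (b, 1) := by
  change toTwisted (b, a) = _
  rw [toTwisted_apply, twistedMul_inv_left, sub_add_cancel]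
  group

theorem toTwisted_semidirectMul (p q : A × A) :
    toTwisted (semidirectMul p q) = twistedMul (toTwisted p) (toTwisted q) := by
  have h := mul_sub_add q.1 p.2 q.2
  simp only [toTwisted_apply, semidirectMul, twistedMul_inv_left, ← h]
  group

end IsSkewBrace

abbrev SkewBrace.circGroup {A : Type*} (B : SkewBrace A) : Group A :=
  letI : Mul A := ⟨B.circ⟩
  letI : Inv A := ⟨B.cinv⟩
  letI : One A := ⟨B.ce⟩
  Group.ofLeftAxioms B.circ_assoc B.ce_circ B.cinv_circ

abbrev SkewBrace.addGroup {A : Type*} (B : SkewBrace A) : AddGroup A :=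
  letI : Add A := ⟨B.mul⟩
  letI : Neg A := ⟨B.inv⟩
  letI : Zero A := ⟨B.e⟩
  AddGroup.ofLeftAxioms B.mul_assoc B.e_mul B.inv_mul

/-- `j₁(b) ∘_⋈ ι(a) = ι(ρ_b(a)) ∘_⋈ j₁(b)`, and `(a, b) ↦ j₁(a) ∘_⋈ ι(b)` is a
group isomorphism from the semidirect product `(A, ∘) ⋉_ρ (A, ·)` onto `A ⋈ A`. -/
theorem semidirect_iso_twisted {A : Type*} (B : SkewBrace A)
    (r : A × A → A × A)
    (hr : ∀ a b, r (a, b) =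
      (B.lam a b, B.circ (B.cinv (B.lam a b)) (B.circ a b)))
    (tm : A × A → A × A → A × A)
    (htm : ∀ p q, tm p q =
      (B.circ p.1 ((r (p.2, q.1)).1), B.circ ((r (p.2, q.1)).2) q.2))
    (sdm : A × A → A × A → A × A)
    (hsdm : ∀ p q, sdm p q = (B.circ p.1 q.1, B.mul (B.rho (B.cinv q.1) p.2) q.2))
    (φ : A × A → A × A)
    (hφ : ∀ p, φ p = tm (p.1, B.ce) (p.2, B.cinv p.2)) :
    (∀ a b, tm (b, B.ce) (a, B.cinv a) =
      tm (B.rho b a, B.cinv (B.rho b a)) (b, B.ce)) ∧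
    Function.Bijective φ ∧
    (∀ p q, φ (sdm p q) = tm (φ p) (φ q)) := by
  let := B.circGroup
  let := B.addGroup
  have : IsSkewBrace A := ⟨B.distrib⟩
  obtain rfl : r = IsSkewBrace.braiding := funext fun p => hr p.1 p.2
  obtain rfl : tm = IsSkewBrace.twistedMul := funext₂ htm
  obtain rfl : sdm = IsSkewBrace.semidirectMul := funext₂ hsdm
  obtain rfl : φ = IsSkewBrace.toTwisted := funext hφ
  exact ⟨IsSkewBrace.twistedMul_j_iota, IsSkewBrace.toTwisted_involutive.bijective,
    IsSkewBrace.toTwisted_semidirectMul⟩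
end

section
/- Let (A, ∘, ·) be a skew brace with braiding r determined by a ▷ b = λ_a(b) = a⁻¹ · (a ∘ b) and (a▷b) ∘ (a◁b) = a ∘ b. Define k: A × A → A × A by k = r². Then the first component of k(a, ā ∘ b) equals b⁻¹ · a · b; that is, the family π_b(a) = b⁻¹ · a · b recovers the standard skew brace action from k = r². -/
/-! Since `λ_x (x̄ ∘ y) = x⁻¹ · y`, the first application of `r` sends `(a, ā ∘ b)` to
`(c, c̄ ∘ b)` with `c = a⁻¹ · b`, a pair of the same shape; the second application
therefore yields `(a⁻¹ · b)⁻¹ · b = b⁻¹ · a · b` in the first component. -/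

namespace SkewBrace

variable {A : Type*} (B : SkewBrace A)

theorem circ_cinv_circ (x y : A) : B.circ x (B.circ (B.cinv x) y) = y := by
  rw [← B.circ_assoc, B.circ_cinv, B.ce_circ]

theorem lam_cinv_circ (x y : A) : B.lam x (B.circ (B.cinv x) y) = B.mul (B.inv x) y := by
  rw [lam, circ_cinv_circ]

theorem inv_eq_of_mul_eq_e {x y : A} (h : B.mul x y = B.e) : B.inv x = y := by
  calc B.inv x = B.mul (B.inv x) (B.mul x y) := by rw [h, B.mul_e]
    _ = y := by rw [← B.mul_assoc, B.inv_mul, B.e_mul]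

theorem inv_inv (x : A) : B.inv (B.inv x) = x :=
  B.inv_eq_of_mul_eq_e (B.inv_mul x)

theorem inv_mul_rev (x y : A) : B.inv (B.mul x y) = B.mul (B.inv y) (B.inv x) :=
  B.inv_eq_of_mul_eq_e <| by rw [B.mul_assoc, ← B.mul_assoc y, B.mul_inv, B.e_mul, B.mul_inv]

end SkewBrace

/-- For `k = r²`, the first component of `k(a, ā ∘ b)` is `b⁻¹ · a · b`:
the standard skew brace action. -/
theorem rsq_gives_standard_action {A : Type*} (B : SkewBrace A)
    (r : A × A → A × A)
    (hr : ∀ a b, r (a, b) =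
      (B.lam a b, B.circ (B.cinv (B.lam a b)) (B.circ a b))) :
    ∀ a b : A, (r (r (a, B.circ (B.cinv a) b))).1 = B.mul (B.mul (B.inv b) a) b := by
  intro a b
  have first_step : r (a, B.circ (B.cinv a) b) =
      (B.mul (B.inv a) b, B.circ (B.cinv (B.mul (B.inv a) b)) b) := by
    rw [hr, B.lam_cinv_circ, B.circ_cinv_circ]
  rw [first_step, hr, B.lam_cinv_circ, B.inv_mul_rev, B.inv_inv, B.mul_assoc]
end
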